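/- Let d ≥ 2 and J = (1/(d(d−1))) Σ_{i≠j} E_{ii} ⊗ E_{jj} on ℂ^d ⊗ ℂ^d. If X is a Hermitian d×d matrix such that J − I_d ⊗ X is block-positive, i.e. ⟨u ⊗ v, (J − I_d ⊗ X)(u ⊗ v)⟩ ≥ 0 for all u, v ∈ ℂ^d, then tr(X) ≤ 0. Consequently sup { tr(X) : X Hermitian, J − I_d ⊗ X block-positive } = 0 (the induced Doeblin coefficient of the corresponding channel vanishes). -/

import Mathlib

open Matrix Kronecker BigOperators
open scoped ComplexOrder

noncomputable section

/-- The trace norm (sum of singular values) of a complex matrix: `tr √(AᴴA)`. -/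
def traceNorm {m n : Type*} [Fintype m] [Fintype n] [DecidableEq n] (A : Matrix m n ℂ) : ℝ :=
  ((Matrix.posSemidef_conjTranspose_mul_self A).1.eigenvectorUnitary.1 *
    diagonal (((↑) : ℝ → ℂ) ∘ (√·) ∘ (Matrix.posSemidef_conjTranspose_mul_self A).1.eigenvalues) *
    (star (Matrix.posSemidef_conjTranspose_mul_self A).1.eigenvectorUnitary : Matrix n n ℂ)).trace.re

/-- A density matrix: positive semidefinite with trace one. -/
def IsDensity {n : Type*} [Fintype n] [DecidableEq n] (ρ : Matrix n n ℂ) : Prop :=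
  ρ.PosSemidef ∧ ρ.trace = 1

/-- Trace norm contraction coefficient of a map on matrices. -/
def etaTr {dA dB : ℕ} (Φ : Matrix (Fin dA) (Fin dA) ℂ → Matrix (Fin dB) (Fin dB) ℂ) : ℝ :=
  sSup {r : ℝ | ∃ ρ σ : Matrix (Fin dA) (Fin dA) ℂ, IsDensity ρ ∧ IsDensity σ ∧ ρ ≠ σ ∧
    r = traceNorm (Φ ρ - Φ σ) / traceNorm (ρ - σ)}

/-- Optimal success probability for transmitting one of `k` messages through `Φ`. -/
def Psucc {dA dB : ℕ} (Φ : Matrix (Fin dA) (Fin dA) ℂ → Matrix (Fin dB) (Fin dB) ℂ)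
    (k : ℕ) : ℝ :=
  sSup {r : ℝ | ∃ (M : Fin k → Matrix (Fin dB) (Fin dB) ℂ)
      (ρ : Fin k → Matrix (Fin dA) (Fin dA) ℂ),
    (∀ i, (M i).PosSemidef) ∧ (∑ i, M i = 1) ∧ (∀ i, IsDensity (ρ i)) ∧
    r = (1 / (k : ℝ)) * ∑ i, ((M i * Φ (ρ i)).trace).re}

/-- The Euclidean (ℓ₂) norm of a complex vector. -/
def l2norm {n : Type*} [Fintype n] (v : n → ℂ) : ℝ :=
  Real.sqrt (∑ i, ‖v i‖ ^ 2)

/-- Choi state of a map on matrices: `(1/dA) ∑ᵢⱼ Eᵢⱼ ⊗ Φ(Eᵢⱼ)`. -/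
def choi {dA dB : ℕ} (Φ : Matrix (Fin dA) (Fin dA) ℂ → Matrix (Fin dB) (Fin dB) ℂ) :
    Matrix (Fin dA × Fin dB) (Fin dA × Fin dB) ℂ :=
  (dA : ℂ)⁻¹ • ∑ i : Fin dA, ∑ j : Fin dA,
    (Matrix.single i j (1 : ℂ)) ⊗ₖ (Φ (Matrix.single i j (1 : ℂ)))

/-- The matrix `J = (1/(d(d−1))) ∑_{i≠j} E_{ii} ⊗ E_{jj}` on `ℂ^d ⊗ ℂ^d`. -/
def Jmat (d : ℕ) : Matrix (Fin d × Fin d) (Fin d × Fin d) ℂ :=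
  ((d : ℂ) * ((d : ℂ) - 1))⁻¹ •
    ∑ p ∈ Finset.univ.filter (fun p : Fin d × Fin d => p.1 ≠ p.2),
      Matrix.single p.1 p.1 (1 : ℂ) ⊗ₖ Matrix.single p.2 p.2 (1 : ℂ)

/-- An operator on `ℂ^d ⊗ ℂ^d` is block-positive if `⟨u⊗v, A(u⊗v)⟩ ≥ 0` for all `u, v`. -/
def BlockPositive {d : ℕ} (A : Matrix (Fin d × Fin d) (Fin d × Fin d) ℂ) : Prop :=
  ∀ u v : Fin d → ℂ,
    0 ≤ (star (fun p : Fin d × Fin d => u p.1 * v p.2) ⬝ᵥ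
      A.mulVec (fun p : Fin d × Fin d => u p.1 * v p.2)).re

/-!
`J` is diagonal in the product basis and vanishes on the vectors `eᵢ ⊗ eᵢ`. Testing
block-positivity of `J - I ⊗ X` on `eᵢ ⊗ eᵢ` therefore gives `Re Xᵢᵢ ≤ 0`, and summing over `i`
gives `Re tr X ≤ 0`. Conversely `J` is positive semidefinite, so `X = 0` is admissible and the
supremum is attained at `0`.
-/

theorem Jmat_eq_diagonal (d : ℕ) :
    Jmat d = diagonal fun p : Fin d × Fin d =>
      if p.1 ≠ p.2 then ((d : ℂ) * ((d : ℂ) - 1))⁻¹ else 0 := by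
  have hterm (p : Fin d × Fin d) :
      (if p.1 ≠ p.2 then single p p (1 : ℂ) else 0) = single p p (if p.1 ≠ p.2 then 1 else 0) := by
    split_ifs <;> simp
  simp only [Jmat, single_kronecker_single, Prod.mk.eta, mul_one]
  rw [Finset.sum_filter, Finset.sum_congr rfl fun p _ => hterm p, sum_single_eq_diagonal,
    ← diagonal_smul]
  simp only [Pi.smul_def, smul_eq_mul, mul_ite, mul_one, mul_zero]

theorem Jmat_posSemidef (d : ℕ) : (Jmat d).PosSemidef := by
  rw [Jmat_eq_diagonal]
  have hd : (0 : ℝ) ≤ d * (d - 1) := by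
    rcases d with _ | d
    · simp
    · push_cast
      nlinarith
  have hc : (0 : ℂ) ≤ ((d : ℂ) * ((d : ℂ) - 1))⁻¹ := by
    rw [show ((d : ℂ) * ((d : ℂ) - 1))⁻¹ = (((d : ℝ) * (d - 1))⁻¹ : ℝ) by push_cast; rfl]
    exact Complex.zero_le_real.mpr (inv_nonneg.mpr hd)
  refine PosSemidef.diagonal fun p => ?_
  dsimp only [Pi.zero_apply]
  split_ifs
  exacts [hc, le_rfl]

theorem Jmat_apply_pair_self {d : ℕ} (i : Fin d) : Jmat d (i, i) (i, i) = 0 := by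
  simp [Jmat_eq_diagonal]

theorem BlockPositive.of_posSemidef {d : ℕ} {A : Matrix (Fin d × Fin d) (Fin d × Fin d) ℂ}
    (hA : A.PosSemidef) : BlockPositive A := fun _ _ =>
  Complex.nonneg_iff.1 (hA.dotProduct_mulVec_nonneg _) |>.1

theorem BlockPositive.re_apply_self_nonneg {d : ℕ} {A : Matrix (Fin d × Fin d) (Fin d × Fin d) ℂ}
    (hA : BlockPositive A) (p : Fin d × Fin d) : 0 ≤ (A p p).re := by
  have hprod : (fun q : Fin d × Fin d =>
      (Pi.single p.1 1 : Fin d → ℂ) q.1 * (Pi.single p.2 1 : Fin d → ℂ) q.2) = Pi.single p 1 := by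
    ext q
    simp only [Pi.single_apply, Prod.ext_iff, ite_and]
    split_ifs <;> simp_all
  simpa [hprod, mulVec_single_one, single_one_dotProduct] using
    hA (Pi.single p.1 1) (Pi.single p.2 1)

theorem trace_re_nonpos_of_blockPositive {d : ℕ} {X : Matrix (Fin d) (Fin d) ℂ}
    (hX : BlockPositive (Jmat d - (1 : Matrix (Fin d) (Fin d) ℂ) ⊗ₖ X)) : X.trace.re ≤ 0 := by
  rw [trace, Complex.re_sum]
  refine Finset.sum_nonpos fun i _ => ?_
  simpa [Jmat_apply_pair_self] using hX.re_apply_self_nonneg (i, i)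

theorem induced_doeblin_coefficient_vanishes_general {d : ℕ} :
    (∀ X : Matrix (Fin d) (Fin d) ℂ, X.IsHermitian →
      BlockPositive (Jmat d - (1 : Matrix (Fin d) (Fin d) ℂ) ⊗ₖ X) →
      X.trace.re ≤ 0) ∧
    sSup {r : ℝ | ∃ X : Matrix (Fin d) (Fin d) ℂ, X.IsHermitian ∧
      BlockPositive (Jmat d - (1 : Matrix (Fin d) (Fin d) ℂ) ⊗ₖ X) ∧
      r = X.trace.re} = 0 := by
  refine ⟨fun X _ hX => trace_re_nonpos_of_blockPositive hX, IsGreatest.csSup_eq ⟨?_, ?_⟩⟩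
  · refine ⟨0, isHermitian_zero, ?_, by simp⟩
    simpa using BlockPositive.of_posSemidef (Jmat_posSemidef d)
  · rintro _ ⟨X, -, hX, rfl⟩
    exact trace_re_nonpos_of_blockPositive hX

/-- for `d ≥ 2`, every Hermitian `X` with `J − I ⊗ X` block-positive has
`tr(X) ≤ 0`; consequently the induced Doeblin coefficient vanishes. -/
theorem induced_doeblin_coefficient_vanishes {d : ℕ} (hd : 2 ≤ d) :
    (∀ X : Matrix (Fin d) (Fin d) ℂ, X.IsHermitian →
      BlockPositive (Jmat d - (1 : Matrix (Fin d) (Fin d) ℂ) ⊗ₖ X) →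
      X.trace.re ≤ 0) ∧
    sSup {r : ℝ | ∃ X : Matrix (Fin d) (Fin d) ℂ, X.IsHermitian ∧
      BlockPositive (Jmat d - (1 : Matrix (Fin d) (Fin d) ℂ) ⊗ₖ X) ∧
      r = X.trace.re} = 0 :=
  induced_doeblin_coefficient_vanishes_general
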